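/- arXiv:2005.00900 — 4 statements merged into one kernel-verified Lean document; each statement's English description precedes it below -/
import Mathlib

section
/- Suppose b₁ = b₂ = b with 0 ≤ b < 1 and μ > (1 − b)/4. Then x = 1/2 is the unique real fixed point of the vector field: f(x, μ) = 0 implies x = 1/2. -/
noncomputable def rmField (b₁ b₂ x μ : ℝ) : ℝ :=
  x * (b₁ + x * (1 - b₁)) * (1 - μ - x) + (1 - x) * (1 + x * (b₂ - 1)) * (μ - x)

/-! For `b₁ = b₂ = b` the field factors as `(1 - 2x)` times a quadratic in `x` whose minimum,
attained at `x = 1/2`, is `μ - (1 - b)/4`; so for `μ > (1 - b)/4` the only zero is `x = 1/2`. -/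

theorem rmField_diag_eq (b x μ : ℝ) :
    rmField b b x μ = (1 - 2 * x) * ((1 - b) * (x - 1 / 2) ^ 2 + (μ - (1 - b) / 4)) := by
  unfold rmField
  ring

theorem rmField_diag_cofactor_pos {b μ : ℝ} (hb : b ≤ 1) (hμ : (1 - b) / 4 < μ) (x : ℝ) :
    0 < (1 - b) * (x - 1 / 2) ^ 2 + (μ - (1 - b) / 4) := by
  have : 0 ≤ (1 - b) * (x - 1 / 2) ^ 2 := mul_nonneg (by linarith) (sq_nonneg _)
  linarith

theorem stmt_6_general (b μ : ℝ) (hb' : b < 1) (hμ : (1 - b) / 4 < μ) :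
    ∀ x : ℝ, rmField b b x μ = 0 → x = 1/2 := by
  intro x hx
  rw [rmField_diag_eq] at hx
  have hlin : 1 - 2 * x = 0 :=
    (mul_eq_zero.mp hx).resolve_right (rmField_diag_cofactor_pos hb'.le hμ x).ne'
  linarith

theorem stmt_6 (b μ : ℝ) (hb : 0 ≤ b) (hb' : b < 1) (hμ : (1 - b) / 4 < μ) :
    ∀ x : ℝ, rmField b b x μ = 0 → x = 1/2 :=
  stmt_6_general b μ hb' hμ
end

section
/- Suppose b₁ = b₂ = b with 0 ≤ b < 1, 0 < μ < (1 − b)/4, and let a₁ = (1 − √(1 − 4μ/(1 − b)))/2 and a₃ = (1 + √(1 − 4μ/(1 − b)))/2. Then f(x, μ) > 0 for all x ∈ (0, a₁) and f(x, μ) < 0 for all x ∈ (a₃, 1). -/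
/-! For `b₁ = b₂ = b` the field factors as `(1 - 2x)(1 - b)(x - a₁)(x - a₃)`, where `a₁ < 1/2 < a₃`
are the roots of `(1 - b)x² - (1 - b)x + μ`. Below `a₁` the two root factors are negative and `1 - 2x`
positive; above `a₃` only `1 - 2x` is negative. -/

lemma rmField_self (b x μ : ℝ) :
    rmField b b x μ = (1 - 2 * x) * ((1 - b) * x ^ 2 - (1 - b) * x + μ) := by
  unfold rmField
  ring

lemma mul_sq_sub_mul_add_eq_mul_roots {c μ : ℝ} (hc : c ≠ 0) (hd : 0 ≤ 1 - 4 * μ / c) (x : ℝ) :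
    c * x ^ 2 - c * x + μ =
      c * ((x - (1 - √(1 - 4 * μ / c)) / 2) * (x - (1 + √(1 - 4 * μ / c)) / 2)) := by
  have hs := Real.sq_sqrt hd
  have hcμ : c * (4 * μ / c) = 4 * μ := by field_simp
  linear_combination (c / 4) * hs - (1 / 4) * hcμ

theorem stmt_7_general (b μ : ℝ) (hb' : b < 1)
    (hμ' : μ < (1 - b) / 4)
    (a₁ a₃ : ℝ)
    (ha₁ : a₁ = (1 - Real.sqrt (1 - 4 * μ / (1 - b))) / 2)
    (ha₃ : a₃ = (1 + Real.sqrt (1 - 4 * μ / (1 - b))) / 2) :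
    (∀ x : ℝ, x ∈ Set.Ioo 0 a₁ → 0 < rmField b b x μ) ∧
    (∀ x : ℝ, x ∈ Set.Ioo a₃ 1 → rmField b b x μ < 0) := by
  have hc : 0 < 1 - b := by linarith
  have hd : 0 < 1 - 4 * μ / (1 - b) := by
    rw [sub_pos, div_lt_one hc]
    linarith
  have hs : 0 < √(1 - 4 * μ / (1 - b)) := Real.sqrt_pos.2 hd
  have hf (x : ℝ) : rmField b b x μ = (1 - 2 * x) * ((1 - b) * ((x - a₁) * (x - a₃))) := by
    rw [rmField_self, ha₁, ha₃, mul_sq_sub_mul_add_eq_mul_roots hc.ne' hd.le]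
  refine ⟨fun x ⟨_, hx⟩ => ?_, fun x ⟨hx, _⟩ => ?_⟩ <;> rw [hf]
  · exact mul_pos (by linarith) (mul_pos hc (mul_pos_of_neg_of_neg (by linarith) (by linarith)))
  · exact mul_neg_of_neg_of_pos (by linarith) (mul_pos hc (mul_pos (by linarith) (by linarith)))

theorem stmt_7 (b μ : ℝ) (hb : 0 ≤ b) (hb' : b < 1) (hμ : 0 < μ)
    (hμ' : μ < (1 - b) / 4)
    (a₁ a₃ : ℝ)
    (ha₁ : a₁ = (1 - Real.sqrt (1 - 4 * μ / (1 - b))) / 2)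
    (ha₃ : a₃ = (1 + Real.sqrt (1 - 4 * μ / (1 - b))) / 2) :
    (∀ x : ℝ, x ∈ Set.Ioo 0 a₁ → 0 < rmField b b x μ) ∧
    (∀ x : ℝ, x ∈ Set.Ioo a₃ 1 → rmField b b x μ < 0) :=
  stmt_7_general b μ hb' hμ' a₁ a₃ ha₁ ha₃
end

section
/- Lyapunov drift inequality near 0: suppose b₁ = b₂ = b with 0 ≤ b < 1, 0 < μ₁ < (1 − b)/4 with smallest fixed point a₁ of f(·, μ₁), and μ₂ > 0. Then there exists κ > 0 and constants c₁ > c₂ > 0 such that for both i = 1, 2 and all x ∈ (0, a₁), −c_i · f(x, μ_i)/x + q_{ij}(c_i − c_j)·log(x) < −κ, where j = 3 − i and q₁₂, q₂₁ > 0 are fixed, i.e., the generator applied to V(x, i) = −c_i log x is uniformly negative on (0, a₁). -/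
/-!
Take `c₂ = 1` and `c₁ = 1 + ε`. In mode 1 the field `f(·, μ₁)` is positive below its root `a₁`, so
the drift is at most `q₁₂ ε log x < q₁₂ ε log a₁ < 0`. In mode 2 the field is bounded below by
`2d = (1 - 2a₁)(μ₂ - (1 - b)/4) > 0`, and `-log x ≤ 1/x - 1` lets the term `-q₂₁ ε log x` be absorbed
into `-2d/x` once `q₂₁ ε = d`.
-/

open Real

theorem rmField_diag (b x μ : ℝ) :
    rmField b b x μ = (1 - 2 * x) * ((1 - b) * x * (x - 1) + μ) := by
  unfold rmField; ring

theorem small_root_spec {k μ a : ℝ} (hk : 0 < k) (hμ : 0 < μ) (hμk : μ < k / 4)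
    (ha : a = (1 - √(1 - 4 * μ / k)) / 2) :
    0 < a ∧ a < 1 / 2 ∧ k * (a * (1 - a)) = μ := by
  have hdisc : 0 < 1 - 4 * μ / k := by
    rw [sub_pos, div_lt_one hk]; linarith
  have hdisc_lt : 1 - 4 * μ / k < 1 := by
    have : 0 < 4 * μ / k := by positivity
    linarith
  have hs0 : 0 < √(1 - 4 * μ / k) := sqrt_pos.2 hdisc
  have hs1 : √(1 - 4 * μ / k) < 1 := (sqrt_lt' one_pos).2 (by linarith)
  have hsq : √(1 - 4 * μ / k) ^ 2 = 1 - 4 * μ / k := sq_sqrt hdisc.le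
  refine ⟨by rw [ha]; linarith, by rw [ha]; linarith, ?_⟩
  rw [ha]
  linear_combination (-k / 4) * hsq + μ * mul_inv_cancel₀ hk.ne'

theorem rmField_diag_pos_of_lt_root {b μ a x : ℝ} (hb : b < 1)
    (hroot : (1 - b) * (a * (1 - a)) = μ) (ha : a < 1 / 2) (hxa : x < a) : 0 < rmField b b x μ := by
  have hfactor : rmField b b x μ = (1 - 2 * x) * ((1 - b) * (a - x) * (1 - a - x)) := by
    rw [rmField_diag, ← hroot]; ring
  rw [hfactor]
  have : 0 < 1 - b := by linarith
  have : 0 < a - x := by linarith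
  have : 0 < 1 - a - x := by linarith
  have : 0 < 1 - 2 * x := by linarith
  positivity

theorem lt_rmField_diag {b μ a x : ℝ} (hb : b ≤ 1) (hμ : (1 - b) / 4 < μ) (ha : a ≤ 1 / 2)
    (hxa : x < a) : (1 - 2 * a) * (μ - (1 - b) / 4) < rmField b b x μ := by
  have hsq :
      rmField b b x μ = (1 - 2 * x) * ((1 - b) * (x - 1 / 2) ^ 2 + (μ - (1 - b) / 4)) := by
    rw [rmField_diag]; ring
  have hm : 0 < μ - (1 - b) / 4 := by linarith
  have hx : 0 < 1 - 2 * x := by linarith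
  have : 0 ≤ (1 - b) * (x - 1 / 2) ^ 2 := mul_nonneg (by linarith) (sq_nonneg _)
  rw [hsq]
  nlinarith

theorem neg_mul_div_add_mul_log_lt {c F q x a : ℝ} (hc : 0 ≤ c) (hF : 0 ≤ F) (hq : 0 < q)
    (hx : 0 < x) (hxa : x < a) : -c * F / x + q * log x < q * log a := by
  have hdrift : -c * F / x ≤ 0 :=
    div_nonpos_of_nonpos_of_nonneg (by nlinarith) hx.le
  have hlog : q * log x < q * log a := mul_lt_mul_of_pos_left (log_lt_log hx hxa) hq
  linarith

theorem neg_div_sub_mul_log_lt {F d x : ℝ} (hd : 0 < d) (hF : 2 * d ≤ F) (hx : 0 < x) :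
    -F / x - d * log x < -d := by
  have hlog : -log x ≤ x⁻¹ - 1 := by
    have := one_sub_inv_le_log_of_pos hx
    linarith
  have hdiv : -F / x ≤ -(2 * d) / x := div_le_div_of_nonneg_right (by linarith) hx.le
  calc -F / x - d * log x ≤ -(2 * d) / x + d * (x⁻¹ - 1) := by
        nlinarith [mul_le_mul_of_nonneg_left hlog hd.le]
    _ = -d / x - d := by field_simp; ring
    _ < -d := by
        have : 0 < d / x := by positivity
        linarith [neg_div x d]

theorem stmt_14_general (b q₁₂ q₂₁ μ₁ μ₂ : ℝ) (hb' : b < 1)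
    (hq₁₂ : 0 < q₁₂) (hq₂₁ : 0 < q₂₁)
    (hμ₁ : 0 < μ₁) (hμ₁' : μ₁ < (1 - b) / 4) (hμ₂ : (1 - b) / 4 < μ₂)
    (a₁ : ℝ) (ha₁ : a₁ = (1 - Real.sqrt (1 - 4 * μ₁ / (1 - b))) / 2) :
    ∃ κ > (0:ℝ), ∃ c₁ c₂ : ℝ, c₂ > 0 ∧ c₁ > c₂ ∧
      ∀ x ∈ Set.Ioo (0:ℝ) a₁,
        (-c₁ * rmField b b x μ₁ / x + q₁₂ * (c₁ - c₂) * Real.log x < -κ) ∧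
        (-c₂ * rmField b b x μ₂ / x + q₂₁ * (c₂ - c₁) * Real.log x < -κ) := by
  obtain ⟨ha₁0, ha₁2, hroot⟩ := small_root_spec (by linarith) hμ₁ hμ₁' ha₁
  set d := (1 - 2 * a₁) * (μ₂ - (1 - b) / 4) / 2
  have hd : 0 < d := by
    have : 0 < μ₂ - (1 - b) / 4 := by linarith
    have : 0 < 1 - 2 * a₁ := by linarith
    positivity
  set ε := d / q₂₁
  have hε : 0 < ε := by positivity
  have hκ₁ : 0 < q₁₂ * ε * -log a₁ :=
    mul_pos (by positivity) (neg_pos.2 (log_neg ha₁0 (by linarith)))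
  refine ⟨min (q₁₂ * ε * -log a₁) d, lt_min hκ₁ hd, 1 + ε, 1, one_pos, by linarith, ?_⟩
  rintro x ⟨hx0, hxa⟩
  constructor
  · have := neg_mul_div_add_mul_log_lt (c := 1 + ε) (by linarith)
      (rmField_diag_pos_of_lt_root hb' hroot ha₁2 hxa).le (mul_pos hq₁₂ hε) hx0 hxa
    rw [add_sub_cancel_left]
    linarith [min_le_left (q₁₂ * ε * -log a₁) d]
  · have hF : 2 * d ≤ rmField b b x μ₂ := by
      have h2d : 2 * d = (1 - 2 * a₁) * (μ₂ - (1 - b) / 4) := by ring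
      linarith [lt_rmField_diag hb'.le hμ₂ ha₁2.le hxa]
    have := neg_div_sub_mul_log_lt hd hF hx0
    have hqε : q₂₁ * (1 - (1 + ε)) = -d := by simp only [ε]; field_simp; ring
    rw [hqε, neg_one_mul]
    linarith [min_le_right (q₁₂ * ε * -log a₁) d]

theorem stmt_14 (b q₁₂ q₂₁ μ₁ μ₂ : ℝ) (hb : 0 ≤ b) (hb' : b < 1)
    (hq₁₂ : 0 < q₁₂) (hq₂₁ : 0 < q₂₁)
    (hμ₁ : 0 < μ₁) (hμ₁' : μ₁ < (1 - b) / 4) (hμ₂ : (1 - b) / 4 < μ₂)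
    (a₁ : ℝ) (ha₁ : a₁ = (1 - Real.sqrt (1 - 4 * μ₁ / (1 - b))) / 2) :
    ∃ κ > (0:ℝ), ∃ c₁ c₂ : ℝ, c₂ > 0 ∧ c₁ > c₂ ∧
      ∀ x ∈ Set.Ioo (0:ℝ) a₁,
        (-c₁ * rmField b b x μ₁ / x + q₁₂ * (c₁ - c₂) * Real.log x < -κ) ∧
        (-c₂ * rmField b b x μ₂ / x + q₂₁ * (c₂ - c₁) * Real.log x < -κ) :=
  stmt_14_general b q₁₂ q₂₁ μ₁ μ₂ hb' hq₁₂ hq₂₁ hμ₁ hμ₁' hμ₂ a₁ ha₁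
end

section
/- Monotone flow toward the stable fixed point: suppose b₁ = b₂ = b with 0 ≤ b < 1 and 0 < μ < (1 − b)/4, with fixed points a₁ < 1/2 < a₃, and let x : [0, ∞) → ℝ solve x' = f(x, μ) with x(0) ∈ (a₁, 1/2). Then x(t) ∈ (a₁, 1/2) for all t ≥ 0 and x is strictly decreasing, converging to a₁ as t → ∞. -/
open Set Filter Topology

section ODE

variable {E : Type*} [NormedAddCommGroup E] [NormedSpace ℝ E]

theorem ODE_solution_eq_of_eq_equilibrium {F : E → E} (hF : LocallyLipschitz F)
    {x : ℝ → E} {a b : ℝ} (hab : a ≤ b) (hx : ∀ t ∈ Icc a b, HasDerivAt x (F (x t)) t)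
    {p : E} (hp : F p = 0) (hxb : x b = p) : x a = p := by
  have hxc : ContinuousOn x (Icc a b) := fun t ht ↦ (hx t ht).continuousAt.continuousWithinAt
  obtain ⟨K, hK⟩ := (hF.locallyLipschitzOn (s := x '' Icc a b)).exists_lipschitzOnWith_of_compact
    (isCompact_Icc.image_of_continuousOn hxc)
  refine ODE_solution_unique_of_mem_Icc_left (v := fun _ ↦ F) (s := fun _ ↦ x '' Icc a b)
    (g := fun _ ↦ p) (fun _ _ ↦ hK) hxc (fun t ht ↦ (hx t (Ioc_subset_Icc_self ht)).hasDerivWithinAt)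
    (fun t ht ↦ mem_image_of_mem x (Ioc_subset_Icc_self ht)) continuousOn_const
    (fun t _ ↦ by simpa [hp] using hasDerivWithinAt_const t (Iic t) p)
    (fun _ _ ↦ ⟨b, right_mem_Icc.2 hab, hxb⟩) hxb (left_mem_Icc.2 hab)

theorem ODE_solution_mem_Ioo_of_equilibria {F : ℝ → ℝ} (hF : LocallyLipschitz F) {p q : ℝ}
    (hp : F p = 0) (hq : F q = 0) {x : ℝ → ℝ} (hx : ∀ t, 0 ≤ t → HasDerivAt x (F (x t)) t)
    (h0 : x 0 ∈ Ioo p q) {t : ℝ} (ht : 0 ≤ t) : x t ∈ Ioo p q := by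
  have hxc : ContinuousOn x (Icc 0 t) := fun s hs ↦ (hx s hs.1).continuousAt.continuousWithinAt
  by_contra hxt
  rcases not_and_or.1 hxt with hpt | htq
  · obtain ⟨s, hs, hxs⟩ := intermediate_value_Icc' ht hxc ⟨not_lt.1 hpt, h0.1.le⟩
    exact h0.1.ne' (ODE_solution_eq_of_eq_equilibrium hF hs.1
      (fun r hr ↦ hx r hr.1) hp hxs)
  · obtain ⟨s, hs, hxs⟩ := intermediate_value_Icc ht hxc ⟨h0.2.le, not_lt.1 htq⟩
    exact h0.2.ne (ODE_solution_eq_of_eq_equilibrium hF hs.1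
      (fun r hr ↦ hx r hr.1) hq hxs)

end ODE

theorem AntitoneOn.exists_tendsto_atTop_of_bddBelow {x : ℝ → ℝ} {a : ℝ}
    (hx : AntitoneOn x (Ici a)) (hbdd : BddBelow (x '' Ici a)) :
    ∃ L, Tendsto x atTop (𝓝 L) := by
  set g : ℝ → ℝ := fun t ↦ x (max t a)
  have hg : Antitone g := fun s t hst ↦
    hx (le_max_right s a) (le_max_right t a) (max_le_max hst le_rfl)
  have hgbdd : BddBelow (range g) :=
    hbdd.mono (range_subset_iff.2 fun t ↦ mem_image_of_mem x (le_max_right t a))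
  refine ⟨_, (tendsto_atTop_ciInf hg hgbdd).congr' ?_⟩
  filter_upwards [eventually_ge_atTop a] with t ht
  simp [g, max_eq_left ht]

theorem eq_zero_of_tendsto_of_tendsto_deriv {x x' : ℝ → ℝ} {L c : ℝ}
    (hx : ∀ᶠ t in atTop, HasDerivAt x (x' t) t) (hxL : Tendsto x atTop (𝓝 L))
    (hx'c : Tendsto x' atTop (𝓝 c)) : c = 0 := by
  obtain ⟨t₀, ht₀⟩ := eventually_atTop.1 hx
  -- mean value theorem on `[t, t + 1]`
  have hslope : ∀ t, ∃ ξ, t₀ ≤ t → t ≤ ξ ∧ x' ξ = x (t + 1) - x t := by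
    intro t
    by_cases ht : t₀ ≤ t
    · obtain ⟨ξ, hξ, hξx⟩ := exists_hasDerivAt_eq_slope x x' (lt_add_one t)
        (fun s hs ↦ (ht₀ s (ht.trans hs.1)).continuousAt.continuousWithinAt)
        (fun s hs ↦ ht₀ s (ht.trans hs.1.le))
      exact ⟨ξ, fun _ ↦ ⟨hξ.1.le, by simpa using hξx⟩⟩
    · exact ⟨0, fun h ↦ absurd h ht⟩
  choose ξ hξ using hslope
  have hξ_tendsto : Tendsto ξ atTop atTop :=
    tendsto_atTop_mono' atTop (eventually_atTop.2 ⟨t₀, fun t ht ↦ (hξ t ht).1⟩) tendsto_id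
  have hdiff : Tendsto (fun t ↦ x (t + 1) - x t) atTop (𝓝 (L - L)) :=
    (hxL.comp (tendsto_atTop_add_const_right _ 1 tendsto_id)).sub hxL
  rw [sub_self] at hdiff
  refine tendsto_nhds_unique ((hx'c.comp hξ_tendsto).congr' ?_) hdiff
  exact eventually_atTop.2 ⟨t₀, fun t ht ↦ (hξ t ht).2⟩

section Field

variable {b μ a : ℝ}

theorem quadratic_smallRoot_eq_zero (hb : b < 1) (hμ : μ ≤ (1 - b) / 4) :
    (1 - b) * ((1 - √(1 - 4 * μ / (1 - b))) / 2) ^ 2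
      - (1 - b) * ((1 - √(1 - 4 * μ / (1 - b))) / 2) + μ = 0 := by
  have hb1 : 0 < 1 - b := by linarith
  have hs : (1 - b) * √(1 - 4 * μ / (1 - b)) ^ 2 = 1 - b - 4 * μ := by
    rw [Real.sq_sqrt (by rw [sub_nonneg, div_le_one hb1]; linarith)]
    field_simp
  linear_combination hs / 4

theorem rmField_eq_mul (ha : (1 - b) * a ^ 2 - (1 - b) * a + μ = 0) (y : ℝ) :
    rmField b b y μ = (1 - b) * (1 - 2 * y) * (y - a) * (y - (1 - a)) := by
  unfold rmField
  linear_combination (1 - 2 * y) * ha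

theorem rmField_neg (hb : b < 1) (ha : (1 - b) * a ^ 2 - (1 - b) * a + μ = 0) {y : ℝ}
    (hy : y ∈ Ioo a (1 / 2)) : rmField b b y μ < 0 := by
  rw [rmField_eq_mul ha]
  obtain ⟨hay, hy2⟩ := hy
  have hpos : 0 < (1 - b) * (1 - 2 * y) * (y - a) := by
    apply mul_pos (mul_pos _ _) _ <;> linarith
  exact mul_neg_of_pos_of_neg hpos (by linarith)

theorem contDiff_rmField : ContDiff ℝ 1 (fun y ↦ rmField b b y μ) := by
  unfold rmField
  fun_prop

end Field

theorem stmt_18_general (b μ : ℝ) (hb' : b < 1)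
    (hμ' : μ < (1 - b) / 4)
    (a₁ : ℝ) (ha₁ : a₁ = (1 - Real.sqrt (1 - 4 * μ / (1 - b))) / 2)
    (x : ℝ → ℝ)
    (hsol : ∀ t, 0 ≤ t → HasDerivAt x (rmField b b (x t) μ) t)
    (h0 : x 0 ∈ Set.Ioo a₁ (1/2)) :
    (∀ t, 0 ≤ t → x t ∈ Set.Ioo a₁ (1/2)) ∧
    StrictAntiOn x (Set.Ici 0) ∧
    Filter.Tendsto x Filter.atTop (nhds a₁) := by
  have hroot : (1 - b) * a₁ ^ 2 - (1 - b) * a₁ + μ = 0 :=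
    ha₁ ▸ quadratic_smallRoot_eq_zero hb' hμ'.le
  have hF := rmField_eq_mul hroot
  have hinv : ∀ t, 0 ≤ t → x t ∈ Ioo a₁ (1 / 2) := fun t ↦
    ODE_solution_mem_Ioo_of_equilibria contDiff_rmField.locallyLipschitz
      (by rw [hF]; ring) (by rw [hF]; ring) hsol h0
  have hanti : StrictAntiOn x (Ici 0) := by
    refine strictAntiOn_of_deriv_neg (convex_Ici 0)
      (fun t ht ↦ (hsol t ht).continuousAt.continuousWithinAt) fun t ht ↦ ?_
    rw [interior_Ici] at ht
    rw [(hsol t ht.le).deriv]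
    exact rmField_neg hb' hroot (hinv t ht.le)
  obtain ⟨L, hL⟩ := hanti.antitoneOn.exists_tendsto_atTop_of_bddBelow
    ⟨a₁, forall_mem_image.2 fun t ht ↦ (hinv t ht).1.le⟩
  have hFL : rmField b b L μ = 0 :=
    eq_zero_of_tendsto_of_tendsto_deriv (eventually_atTop.2 ⟨0, hsol⟩) hL
      ((contDiff_rmField.continuous.tendsto L).comp hL)
  have ha₁L : a₁ ≤ L :=
    ge_of_tendsto hL (eventually_atTop.2 ⟨0, fun t ht ↦ (hinv t ht).1.le⟩)
  have hL_lt : L < 1 / 2 := (le_of_tendsto hL (eventually_atTop.2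
    ⟨0, fun t ht ↦ hanti.antitoneOn self_mem_Ici ht ht⟩)).trans_lt h0.2
  have hLa : L = a₁ := by
    by_contra hne
    exact (rmField_neg hb' hroot ⟨lt_of_le_of_ne ha₁L (Ne.symm hne), hL_lt⟩).ne hFL
  exact ⟨hinv, hanti, hLa ▸ hL⟩

theorem stmt_18 (b μ : ℝ) (hb : 0 ≤ b) (hb' : b < 1) (hμ : 0 < μ)
    (hμ' : μ < (1 - b) / 4)
    (a₁ : ℝ) (ha₁ : a₁ = (1 - Real.sqrt (1 - 4 * μ / (1 - b))) / 2)
    (x : ℝ → ℝ)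
    (hsol : ∀ t, 0 ≤ t → HasDerivAt x (rmField b b (x t) μ) t)
    (h0 : x 0 ∈ Set.Ioo a₁ (1/2)) :
    (∀ t, 0 ≤ t → x t ∈ Set.Ioo a₁ (1/2)) ∧
    StrictAntiOn x (Set.Ici 0) ∧
    Filter.Tendsto x Filter.atTop (nhds a₁) :=
  stmt_18_general b μ hb' hμ' a₁ ha₁ x hsol h0
end
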